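/- The queer lowering operator is injective where defined (queer axiom B2): for every strict partition γ and every n, if S, T ∈ SSHT_n(γ) satisfy f_0*(S) = f_0*(T) ≠ 0, then S = T. -/

import Mathlib

/-! ## Strict partitions and shifted diagrams (French convention, 1-indexed).

A marked entry `i'` is encoded as `2*i - 1` and an unmarked entry `i` as `2*i`;
the value `0` denotes an empty cell / a cell outside the diagram.  The total
order `1' < 1 < 2' < 2 < ⋯` then coincides with the usual order on `ℕ`. -/

/-- A strict partition: a strictly decreasing list of positive integers. -/
def StrictPartition (γ : List ℕ) : Prop :=
  γ.Chain' (· > ·) ∧ ∀ x ∈ γ, 0 < x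

/-- The `r`-th part (1-indexed) of a partition given as a list. -/
def part (γ : List ℕ) (r : ℕ) : ℕ := γ.getD (r - 1) 0

/-- The cell `(r, c)` (row `r` indexed from the bottom, column `c`, both 1-indexed)
belongs to the shifted diagram of `γ`: row `r` has `γ_r` cells, with its leftmost
cell on the main diagonal `c = r`. -/
def ShiftedShape (γ : List ℕ) (rc : ℕ × ℕ) : Prop :=
  1 ≤ rc.1 ∧ rc.1 ≤ γ.length ∧ rc.1 ≤ rc.2 ∧ rc.2 < rc.1 + part γ rc.1

instance (γ : List ℕ) (rc : ℕ × ℕ) : Decidable (ShiftedShape γ rc) := by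
  unfold ShiftedShape; infer_instance

/-- A common bound for all row and column indices of cells of the (shifted) diagram. -/
def colBound (γ : List ℕ) : ℕ := γ.length + γ.foldr max 0

/-- The cells of the shifted diagram of `γ`, as a finite set. -/
def shapeCells (γ : List ℕ) : Finset (ℕ × ℕ) :=
  (Finset.range (colBound γ + 1) ×ˢ Finset.range (colBound γ + 1)).filter
    (fun rc => ShiftedShape γ rc)

/-- A semistandard shifted tableau of shape `γ` with entries in
`{1' < 1 < 2' < 2 < ⋯ < n' < n}` (encoded as `{1, 2, …, 2n}`): entries weakly
increase along rows (eastward) and columns (northward, i.e. increasing row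
index), with at most one unmarked `i` per column, at most one marked `i'` per
row, and no marked entries on the main diagonal. -/
structure SSHT (n : ℕ) (γ : List ℕ) where
  entry : ℕ × ℕ → ℕ
  zero_outside : ∀ rc, ¬ ShiftedShape γ rc → entry rc = 0
  pos : ∀ rc, ShiftedShape γ rc → 1 ≤ entry rc
  le_two_n : ∀ rc, ShiftedShape γ rc → entry rc ≤ 2 * n
  row_mono : ∀ r c c', c < c' → ShiftedShape γ (r, c) → ShiftedShape γ (r, c') →
    entry (r, c) ≤ entry (r, c')
  col_mono : ∀ r r' c, r < r' → ShiftedShape γ (r, c) → ShiftedShape γ (r', c) →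
    entry (r, c) ≤ entry (r', c)
  col_unmarked : ∀ r r' c, r < r' → ShiftedShape γ (r, c) → ShiftedShape γ (r', c) →
    entry (r, c) = entry (r', c) → entry (r, c) % 2 = 1
  row_marked : ∀ r c c', c < c' → ShiftedShape γ (r, c) → ShiftedShape γ (r, c') →
    entry (r, c) = entry (r, c') → entry (r, c) % 2 = 0
  diag_unmarked : ∀ r, ShiftedShape γ (r, r) → entry (r, r) % 2 = 0

/-- The weight of a filling of the shifted diagram of `γ`: `wtFun γ f k` is the
number of cells whose entry equals `k` or `k'` (encoded `2k` or `2k-1`). -/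
def wtFun (γ : List ℕ) (f : ℕ × ℕ → ℕ) (k : ℕ) : ℕ :=
  ((shapeCells γ).filter (fun rc => f rc = 2 * k - 1 ∨ f rc = 2 * k)).card

/-! ## The queer lowering operator `f_0*`. -/

/-- The cell of the rightmost unmarked entry `1` (encoded `2`) of `T`, if any. -/
def rightmostOne {n : ℕ} {γ : List ℕ} (T : SSHT n γ) : Option (ℕ × ℕ) :=
  (((List.range (colBound γ + 1)).flatMap (fun r =>
      (List.range (colBound γ + 1)).map (fun c => (r, c)))).filter
    (fun rc => decide (ShiftedShape γ rc) && decide (T.entry rc = 2))).foldr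
    (fun a b => match b with
      | none => some a
      | some b' => if b'.2 ≤ a.2 then some a else some b') none

/-- The queer lowering operator `f_0*`, described on underlying fillings:
`queerLowerFun T = none` when `f_0*(T) = 0` (no entry `1`, or some entry `2'`);
otherwise the rightmost `1` becomes `2'` off the main diagonal and `2` on it. -/
def queerLowerFun {n : ℕ} {γ : List ℕ} (T : SSHT n γ) : Option (ℕ × ℕ → ℕ) :=
  if ∃ rc ∈ shapeCells γ, T.entry rc = 3 then none
  else
    match rightmostOne T with
    | none => none
    | some (r, c) =>
      some (fun rc => if rc = (r, c) then (if r = c then 4 else 3) else T.entry rc)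

/-! Both tableaux are recovered from `F = f_0*(S) = f_0*(T)` by turning the changed cell back
into `1`, so it suffices that they changed the same cell. If `S` changed an off-diagonal cell `p`,
then `F p = 2'`, and unless `T` also changed `p`, `T` itself contains a `2'`, which `f_0*(T) ≠ 0`
forbids. So two different changed cells are diagonal, `(r, r)` and `(r', r')` with `r < r'` say,
and one of the tableaux has `2` at `(r, r)` and `1` at `(r', r')`. As `γ` is strict, `(r, r')` is
a cell, and the entries cannot increase weakly along row `r` and then column `r'`. -/

open Function

theorem List.mem_of_foldr_eq_some {α : Type*} {f : α → Option α → Option α}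
    (hf : ∀ a b x, f a b = some x → x = a ∨ b = some x) :
    ∀ {l : List α} {x : α}, l.foldr f none = some x → x ∈ l
  | [], _, h => nomatch h
  | a :: l, x, h => by
    rcases hf a _ x h with rfl | h'
    · exact List.mem_cons_self
    · exact List.mem_cons_of_mem a (List.mem_of_foldr_eq_some hf h')

theorem List.getD_le_foldr_max (l : List ℕ) (i : ℕ) : l.getD i 0 ≤ l.foldr max 0 := by
  induction l generalizing i with
  | nil => simp
  | cons a l ih =>
    cases i with
    | zero => exact le_max_left _ _
    | succ i => exact (ih i).trans (le_max_right _ _)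

theorem mem_shapeCells {γ : List ℕ} {rc : ℕ × ℕ} : rc ∈ shapeCells γ ↔ ShiftedShape γ rc := by
  have := γ.getD_le_foldr_max (rc.1 - 1)
  simp only [shapeCells, Finset.mem_filter, Finset.mem_product, Finset.mem_range, colBound,
    and_iff_right_iff_imp]
  rintro ⟨-, h, -, h'⟩
  unfold part at h'
  omega

theorem SSHT.ext {n : ℕ} {γ : List ℕ} {S T : SSHT n γ} (h : S.entry = T.entry) : S = T := by
  cases S; cases T; cases h; rfl

theorem rightmostOne_spec {n : ℕ} {γ : List ℕ} {T : SSHT n γ} {p : ℕ × ℕ}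
    (h : rightmostOne T = some p) : ShiftedShape γ p ∧ T.entry p = 2 := by
  have hf : ∀ (a : ℕ × ℕ) b x, (match b with
      | none => some a
      | some b' => if b'.2 ≤ a.2 then some a else some b') = some x → x = a ∨ b = some x := by
    rintro a (_ | b) x hx
    · exact .inl (Option.some_inj.mp hx).symm
    · dsimp only at hx
      split_ifs at hx <;> simp_all
  simpa using (List.mem_filter.mp (List.mem_of_foldr_eq_some hf h)).2

namespace StrictPartition

variable {γ : List ℕ} (hγ : StrictPartition γ)
include hγ

theorem part_succ_lt {r : ℕ} (h1 : 1 ≤ r) (hr : r < γ.length) : part γ (r + 1) < part γ r := by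
  have := List.isChain_iff_getElem.mp hγ.1 (r - 1) (by omega)
  simp only [part, List.getD_eq_getElem?_getD, List.getElem?_eq_getElem (show r < γ.length by omega),
    List.getElem?_eq_getElem (show r - 1 < γ.length by omega), Nat.add_sub_cancel]
  simpa [show r - 1 + 1 = r by omega] using this

theorem part_add_le {r d : ℕ} (h1 : 1 ≤ r) (h : r + d ≤ γ.length) :
    part γ (r + d) + d ≤ part γ r := by
  induction d with
  | zero => rfl
  | succ d ih =>
    show part γ (r + d + 1) + (d + 1) ≤ part γ r
    have := hγ.part_succ_lt (r := r + d) (by omega) (by omega)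
    have := ih (by omega)
    omega

theorem shiftedShape_of_diag {r r' : ℕ} (hrr : r ≤ r') (h : ShiftedShape γ (r, r))
    (h' : ShiftedShape γ (r', r')) : ShiftedShape γ (r, r') := by
  dsimp only [ShiftedShape] at h h' ⊢
  have := hγ.part_add_le h.1 (d := r' - r) (by omega)
  rw [Nat.add_sub_cancel' hrr] at this
  omega

end StrictPartition

theorem SSHT.entry_diag_le {n : ℕ} {γ : List ℕ} (hγ : StrictPartition γ) (T : SSHT n γ)
    {r r' : ℕ} (hrr : r < r') (h : ShiftedShape γ (r, r)) (h' : ShiftedShape γ (r', r')) :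
    T.entry (r, r) ≤ T.entry (r', r') :=
  have hmid := hγ.shiftedShape_of_diag hrr.le h h'
  (T.row_mono r r r' hrr h hmid).trans (T.col_mono r r' r' hrr hmid h')

section queerLowerFun

variable {n : ℕ} {γ : List ℕ}

theorem exists_of_queerLowerFun_eq_some {T : SSHT n γ} {F : ℕ × ℕ → ℕ}
    (h : queerLowerFun T = some F) :
    ∃ p, ShiftedShape γ p ∧ T.entry p = 2 ∧ (∀ q, ShiftedShape γ q → T.entry q ≠ 3) ∧
      F = update T.entry p (if p.1 = p.2 then 4 else 3) := by
  unfold queerLowerFun at h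
  split_ifs at h with h3
  rcases hp : rightmostOne T with _ | ⟨r, c⟩
  · simp [hp] at h
  simp only [hp, Option.some_inj] at h
  obtain ⟨hshape, h2⟩ := rightmostOne_spec hp
  refine ⟨(r, c), hshape, h2, fun q hq h3q => h3 ⟨q, mem_shapeCells.mpr hq, h3q⟩, ?_⟩
  subst h
  funext x
  by_cases hx : x = (r, c) <;> simp [hx]

theorem diag_and_entry_eq_four_of_update_eq {S T : SSHT n γ} {F : ℕ × ℕ → ℕ} {p q : ℕ × ℕ}
    (hp : ShiftedShape γ p) (hpq : p ≠ q) (hT3 : ∀ x, ShiftedShape γ x → T.entry x ≠ 3)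
    (hS : F = update S.entry p (if p.1 = p.2 then 4 else 3))
    (hT : F = update T.entry q (if q.1 = q.2 then 4 else 3)) :
    p.1 = p.2 ∧ T.entry p = 4 := by
  have hTp : T.entry p = if p.1 = p.2 then 4 else 3 := by
    rw [← update_of_ne hpq _ T.entry, ← hT, hS, update_self]
  split_ifs at hTp with hd
  · exact ⟨hd, hTp⟩
  · exact absurd hTp (hT3 p hp)

end queerLowerFun

/-- (Queer axiom B2.) The queer lowering operator is injective
where defined: if `f_0*(S) = f_0*(T) ≠ 0` then `S = T`. -/
theorem queerLower_injective (n : ℕ) (γ : List ℕ) (hγ : StrictPartition γ)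
    (S T : SSHT n γ) (h : queerLowerFun S = queerLowerFun T)
    (hne : queerLowerFun T ≠ none) : S = T := by
  obtain ⟨F, hT⟩ := Option.ne_none_iff_exists'.mp hne
  obtain ⟨p, hpS, hSp, hS3, hFS⟩ := exists_of_queerLowerFun_eq_some (h.trans hT)
  obtain ⟨q, hqT, hTq, hT3, hFT⟩ := exists_of_queerLowerFun_eq_some hT
  by_cases hpq : p = q
  · subst hpq
    refine SSHT.ext (funext fun x => ?_)
    by_cases hx : x = p
    · rw [hx, hSp, hTq]
    · rw [← update_of_ne hx _ S.entry, ← update_of_ne hx _ T.entry, ← hFS, ← hFT]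
  obtain ⟨hp, hTp⟩ := diag_and_entry_eq_four_of_update_eq hpS hpq hT3 hFS hFT
  obtain ⟨hq, hSq⟩ := diag_and_entry_eq_four_of_update_eq hqT (Ne.symm hpq) hS3 hFT hFS
  obtain ⟨r, _⟩ := p
  obtain ⟨r', _⟩ := q
  dsimp only at hp hq
  subst hp hq
  have hrr : r ≠ r' := by rintro rfl; exact hpq rfl
  rcases hrr.lt_or_gt with hrr | hrr
  · have := T.entry_diag_le hγ hrr hpS hqT
    omega
  · have := S.entry_diag_le hγ hrr hqT hpS
    omega
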